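/- arXiv:2105.09181 — 2 statements merged into one kernel-verified Lean document; each statement's English description precedes it below -/
import Mathlib

section
/- Let B = {b_1, …, b_d} ⊂ ℤ^d be a basis of ℝ^d, and let A ⊂ ℤ^d be finite with B ∪ {0} ⊆ A ⊆ H(B ∪ {0}). Let u ∈ S(A,B) be nonzero and let u = a_1 + ⋯ + a_{N_A(u)} be any representation with all a_i ∈ A. Then: (i) no nonempty subsum ∑_{i∈I} a_i lies in Λ_B; (ii) no subsum ∑_{i∈I} a_i with |I| ≥ 2 is congruent modulo Λ_B to an element of A. Consequently S(A,B) is finite and K(A,B) ≤ k(Λ_A/Λ_B, A_B ∖ {0}), where A_B is the image of A in Λ_A/Λ_B. -/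
/-!
In the coordinates of the basis `B`, every element of `A ⊆ H(B ∪ {0})` has nonnegative
coordinates with sum at most `1`. Take a representation `u = a₁ + ⋯ + a_N` with `N = N_A(u)`.
If `∑_{i ∈ I} aᵢ ∈ Λ_B`, its coordinates are nonnegative integers with sum at most `|I|`, so the
terms indexed by `I` can be traded for that many elements of `B`: the representation gets
shorter or acquires an element of `B`, against `u ∈ S(A,B)`. If `∑_{i ∈ I} aᵢ ≡ a'` modulo `Λ_B`
with `a' ∉ B ∪ {0}`, the coordinates of `a'` are all `< 1` with positive sum, so those of
`∑_{i ∈ I} aᵢ - a'` are nonnegative integers with sum `< |I|`, and the same trade works with `a'`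
added; when `a' ∈ B ∪ {0}` we are back in the first case. Hence the classes of the `aᵢ` modulo
`Λ_B` form a sequence of the kind counted by `k`; no two of its `N + 1` prefix sums coincide, so
`N < |ℤ^d/Λ_B|`, which makes `S(A,B)` finite.
-/

open Pointwise MeasureTheory

noncomputable section

/-- Embedding of integer vectors into real vectors. -/
def emb (d : ℕ) : (Fin d → ℤ) → (Fin d → ℝ) := fun x i => (x i : ℝ)

/-- The `N`-fold sumset `NA` (with `0·A = {0}`). -/
def nfold (d : ℕ) (A : Set (Fin d → ℤ)) (N : ℕ) : Set (Fin d → ℤ) :=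
  {x | ∃ f : Fin N → (Fin d → ℤ), (∀ i, f i ∈ A) ∧ x = ∑ i, f i}

/-- `P(A) = ⋃_{N ≥ 1} NA`. -/
def PA (d : ℕ) (A : Set (Fin d → ℤ)) : Set (Fin d → ℤ) :=
  ⋃ N ∈ Set.Ici 1, nfold d A N

/-- The width `w(A) = max_{a₁,a₂ ∈ A} ‖a₁ - a₂‖_∞`. -/
def width (d : ℕ) (A : Finset (Fin d → ℤ)) : ℕ :=
  (A ×ˢ A).sup fun p => Finset.univ.sup fun i => (p.1 i - p.2 i).natAbs

/-- The convex hull `H(A)` in `ℝ^d`. -/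
def hull (d : ℕ) (A : Finset (Fin d → ℤ)) : Set (Fin d → ℝ) :=
  convexHull ℝ (emb d '' ↑A)

/-- The cone `C_B = {∑_{b ∈ B} c_b b : c_b ≥ 0}` generated by `B`. -/
def cone (d : ℕ) (B : Finset (Fin d → ℤ)) : Set (Fin d → ℝ) :=
  {x | ∃ c : (Fin d → ℤ) → ℝ, (∀ a, 0 ≤ c a) ∧ x = ∑ a ∈ B, c a • emb d a}

/-- The lattice (subgroup of `ℤ^d`) generated by a set `S`. -/
def latt (d : ℕ) (S : Set (Fin d → ℤ)) : AddSubgroup (Fin d → ℤ) :=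
  AddSubgroup.closure S

/-- The exceptional set `E(A) = (C_A ∩ Λ_A) ∖ P(A)`, viewed inside `ℤ^d`. -/
def excep (d : ℕ) (A : Finset (Fin d → ℤ)) : Set (Fin d → ℤ) :=
  {x | emb d x ∈ cone d A ∧ x ∈ latt d ↑A ∧ x ∉ PA d ↑A}

/-- The set of (lattice) extreme points of `H(A)`: those `p` with `emb p ∈ H(A)` such that
some `v ∈ span ℝ (A - A)`, `v ≠ 0`, satisfies `⟨v,x⟩ > ⟨v,p⟩` for all `x ∈ H(A) ∖ {p}`. -/
def exP (d : ℕ) (A : Finset (Fin d → ℤ)) : Set (Fin d → ℤ) :=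
  {p | emb d p ∈ hull d A ∧
    ∃ v ∈ Submodule.span ℝ (emb d '' ((A : Set (Fin d → ℤ)) - (A : Set (Fin d → ℤ)))),
      v ≠ (0 : Fin d → ℝ) ∧
      ∀ x ∈ hull d A, x ≠ emb d p → (∑ i, v i * emb d p i) < ∑ i, v i * x i}

/-- The structure equation
`NA = (N·H(A) ∩ (N·a₀ + Λ_{A-A})) ∖ ⋃_{a ∈ ex(H(A))} (N·a - E(a - A))`. -/
def structEq (d : ℕ) (A : Finset (Fin d → ℤ)) (a0 : Fin d → ℤ) (N : ℕ) : Prop :=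
  emb d '' nfold d ↑A N =
    ((N : ℝ) • hull d A ∩
      emb d '' (({N • a0} : Set (Fin d → ℤ)) +
        (latt d ((A : Set (Fin d → ℤ)) - (A : Set (Fin d → ℤ))) : Set (Fin d → ℤ)))) \
    ⋃ a ∈ exP d A,
      emb d '' (({N • a} : Set (Fin d → ℤ)) - excep d (A.image fun y => a - y))

/-- `H(A)` is a `d`-simplex: there is `B ⊆ A` with `|B| = d+1`, `B - B` spanning `ℝ^d`,
and `H(A) = H(B)`. -/
def IsSimplex (d : ℕ) (A : Finset (Fin d → ℤ)) : Prop :=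
  ∃ B ⊆ A, B.card = d + 1 ∧
    Submodule.span ℝ (emb d '' ((B : Set (Fin d → ℤ)) - (B : Set (Fin d → ℤ)))) = ⊤ ∧
    hull d B = hull d A

/-- `N_A(v)`: the minimal positive `N` with `v ∈ NA`, and `N_A(0) = 0`. -/
def NAfn (d : ℕ) (A : Set (Fin d → ℤ)) (v : Fin d → ℤ) : ℕ :=
  if v = 0 then 0 else sInf {N : ℕ | 0 < N ∧ v ∈ nfold d A N}

/-- The set `S(A,B)` of `B`-minimal elements. -/
def Smin (d : ℕ) (A B : Set (Fin d → ℤ)) : Set (Fin d → ℤ) :=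
  {0} ∪ {u | u ∈ PA d A ∧ u ≠ 0 ∧
    ∀ f : Fin (NAfn d A u) → (Fin d → ℤ), (∀ i, f i ∈ A) → u = ∑ i, f i →
      ∀ i, f i ∉ B ∪ ({0} : Set (Fin d → ℤ))}

/-- `k(G,H)`: the length of the longest sum of elements of `H` (with repetition) having no
nonempty subsum equal to `0` and no subsum of length `> 1` belonging to `H`. -/
def kConst {G : Type*} [AddCommGroup G] (H : Set G) : ℕ :=
  sSup {k : ℕ | ∃ h : Fin k → G, (∀ i, h i ∈ H) ∧
    (∀ I : Finset (Fin k), I.Nonempty → ∑ i ∈ I, h i ≠ 0) ∧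
    (∀ I : Finset (Fin k), 2 ≤ I.card → ∑ i ∈ I, h i ∉ H)}

section CornerSimplex

variable {𝕜 E ι : Type*} [Field 𝕜] [LinearOrder 𝕜] [IsStrictOrderedRing 𝕜]
  [AddCommGroup E] [Module 𝕜 E] [Fintype ι] (Bb : Module.Basis ι 𝕜 E) {x : E}

namespace Module.Basis

theorem repr_nonneg_and_sum_le_one_of_mem_convexHull
    (hx : x ∈ convexHull 𝕜 (Set.range Bb ∪ {0})) :
    (∀ j, 0 ≤ Bb.repr x j) ∧ ∑ j, Bb.repr x j ≤ 1 := by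
  classical
  refine convexHull_min (t := {y | (∀ j, 0 ≤ Bb.repr y j) ∧ ∑ j, Bb.repr y j ≤ 1}) ?_ ?_ hx
  · rintro y (⟨j, rfl⟩ | rfl)
    · simp [Finsupp.single_apply, apply_ite]
    · simp
  · simp only [Set.ofPred_and, Set.ofPred_forall]
    refine (convex_iInter fun j => convex_halfSpace_ge (Bb.coord j).isLinear 0).inter ?_
    simpa using convex_halfSpace_le (∑ j, Bb.coord j).isLinear 1

theorem repr_lt_one_of_mem_convexHull (hx : x ∈ convexHull 𝕜 (Set.range Bb ∪ {0}))
    (hxB : x ∉ Set.range Bb) (j : ι) : Bb.repr x j < 1 := by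
  classical
  obtain ⟨hnn, hsum⟩ := Bb.repr_nonneg_and_sum_le_one_of_mem_convexHull hx
  have hle : ∀ k, Bb.repr x k ≤ ∑ k, Bb.repr x k := fun k =>
    Finset.single_le_sum (fun k _ => hnn k) (Finset.mem_univ k)
  refine (hle j |>.trans hsum).lt_of_ne fun hj => hxB ⟨j, Bb.repr.injective ?_⟩
  ext k
  rw [Bb.repr_self, Finsupp.single_apply]
  split_ifs with hjk
  · rw [← hjk, hj]
  · have := Finset.add_le_sum (fun k _ => hnn k) (Finset.mem_univ j) (Finset.mem_univ k) hjk
    linarith [hnn k]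

theorem sum_repr_pos_of_mem_convexHull (hx : x ∈ convexHull 𝕜 (Set.range Bb ∪ {0}))
    (hx0 : x ≠ 0) : 0 < ∑ j, Bb.repr x j := by
  have hnn := (Bb.repr_nonneg_and_sum_le_one_of_mem_convexHull hx).1
  refine (Finset.sum_nonneg fun j _ => hnn j).lt_of_ne fun h => hx0 ?_
  have hzero := (Finset.sum_eq_zero_iff_of_nonneg fun j _ => hnn j).mp h.symm
  exact Bb.forall_coord_eq_zero_iff.mp fun j => hzero j (Finset.mem_univ j)

theorem repr_sum_nonneg_and_sum_le_card {κ : Type*} {y : κ → E} (I : Finset κ)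
    (hy : ∀ i ∈ I, y i ∈ convexHull 𝕜 (Set.range Bb ∪ {0})) :
    (∀ j, 0 ≤ Bb.repr (∑ i ∈ I, y i) j) ∧ ∑ j, Bb.repr (∑ i ∈ I, y i) j ≤ I.card := by
  have hc := fun i hi => Bb.repr_nonneg_and_sum_le_one_of_mem_convexHull (hy i hi)
  simp only [map_sum, Finsupp.finsetSum_apply]
  refine ⟨fun j => Finset.sum_nonneg fun i hi => (hc i hi).1 j, ?_⟩
  rw [Finset.sum_comm]
  simpa using Finset.sum_le_card_nsmul I _ 1 fun i hi => (hc i hi).2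

end Module.Basis

end CornerSimplex

section Lattice

variable {d : ℕ}

def embLinear (d : ℕ) : (Fin d → ℤ) →ₗ[ℤ] (Fin d → ℝ) :=
  ((Int.castAddHom ℝ).compLeft (Fin d)).toIntLinearMap

@[simp]
theorem coe_embLinear : ⇑(embLinear d) = emb d := rfl

theorem emb_zero : emb d 0 = 0 := map_zero (embLinear d)

theorem emb_sub (x y : Fin d → ℤ) : emb d (x - y) = emb d x - emb d y := map_sub (embLinear d) x y

theorem emb_sum {ι : Type*} (s : Finset ι) (f : ι → Fin d → ℤ) :
    emb d (∑ i ∈ s, f i) = ∑ i ∈ s, emb d (f i) :=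
  map_sum (embLinear d) f s

theorem emb_injective : Function.Injective (emb d) := fun _ _ h =>
  funext fun i => Int.cast_injective (congrFun h i)

variable {b : Fin d → Fin d → ℤ}

theorem latt_eq_span : latt d (Set.range b) = (Submodule.span ℤ (Set.range b)).toAddSubgroup :=
  (Submodule.span_int_eq_addSubgroupClosure _).symm

theorem finite_quotient_latt (hb : LinearIndependent ℝ fun i => emb d (b i)) :
    Finite ((Fin d → ℤ) ⧸ latt d (Set.range b)) := by
  have hbℤ : LinearIndependent ℤ b :=
    LinearIndependent.of_comp (embLinear d) (LinearIndependent.restrict_scalars' ℤ hb)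
  rw [latt_eq_span]
  exact Submodule.finiteQuotientOfFreeOfRankEq _ <| by
    rw [finrank_span_eq_card hbℤ, Module.finrank_fin_fun, Fintype.card_fin]

variable (hb : LinearIndependent ℝ fun i => emb d (b i))

def latticeBasis : Module.Basis (Fin d) ℝ (Fin d → ℝ) :=
  basisOfLinearIndependentOfCardEqFinrank' _ hb (by simp)

@[simp]
theorem coe_latticeBasis : ⇑(latticeBasis hb) = fun i => emb d (b i) :=
  coe_basisOfLinearIndependentOfCardEqFinrank' ..

theorem image_emb_range_union_zero :
    emb d '' (Set.range b ∪ {0}) = Set.range (latticeBasis hb) ∪ {0} := by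
  rw [Set.image_union, Set.image_singleton, ← Set.range_comp, coe_latticeBasis,
    emb_zero]
  rfl

theorem latticeBasis_repr_emb_sum (m : Fin d → ℤ) :
    (latticeBasis hb).repr (emb d (∑ j, m j • b j)) = fun j => (m j : ℝ) := by
  convert (latticeBasis hb).repr_sum_self fun j => (m j : ℝ) using 3
  rw [coe_latticeBasis, ← coe_embLinear, map_sum]
  exact Finset.sum_congr rfl fun j _ => by rw [map_zsmul, Int.cast_smul_eq_zsmul]

theorem exists_nat_coeffs_of_mem_latt {v : Fin d → ℤ} (hv : v ∈ latt d (Set.range b))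
    (hgt : ∀ j, -1 < (latticeBasis hb).repr (emb d v) j) :
    ∃ n : Fin d → ℕ, ∑ j, n j • b j = v ∧ ∀ j, (n j : ℝ) = (latticeBasis hb).repr (emb d v) j := by
  rw [latt_eq_span, Submodule.mem_toAddSubgroup,
    Submodule.mem_span_range_iff_exists_fun] at hv
  obtain ⟨m, rfl⟩ := hv
  have hm : ∀ j, 0 ≤ m j := fun j => by
    have h := hgt j
    simp only [latticeBasis_repr_emb_sum] at h
    have : (-1 : ℤ) < m j := by exact_mod_cast h
    omega
  refine ⟨fun j => (m j).toNat, ?_, fun j => ?_⟩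
  · refine Finset.sum_congr rfl fun j _ => ?_
    rw [← natCast_zsmul, Int.toNat_of_nonneg (hm j)]
  · simp only [latticeBasis_repr_emb_sum]
    rw [← Int.cast_natCast, Int.toNat_of_nonneg (hm j)]

end Lattice

theorem Multiset.exists_map_univ_eq {α : Type*} {N : ℕ} {t : Multiset α}
    (ht : Multiset.card t = N) : ∃ f : Fin N → α, Finset.univ.val.map f = t := by
  obtain ⟨l, rfl⟩ := Quot.exists_rep t
  obtain rfl : l.length = N := ht
  exact ⟨l.get, by rw [Fin.univ_val_map, List.ofFn_get]; rfl⟩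

theorem Multiset.exists_sum_nsmul_eq {ι M : Type*} [Fintype ι] [AddCommMonoid M]
    (n : ι → ℕ) (v : ι → M) : ∃ s : Multiset M,
      (∀ x ∈ s, x ∈ Set.range v) ∧ s.sum = ∑ i, n i • v i ∧ Multiset.card s = ∑ i, n i := by
  refine ⟨∑ i, Multiset.replicate (n i) (v i), fun x hx => ?_, ?_, ?_⟩
  · obtain ⟨i, -, hi⟩ := Multiset.mem_sum.mp hx
    exact ⟨i, (Multiset.eq_of_mem_replicate hi).symm⟩
  · simp [Multiset.sum_sum]
  · simp [Multiset.card_sum]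

section Minimal

variable {d : ℕ} {A B : Set (Fin d → ℤ)} {u : Fin d → ℤ}

theorem nfold_finite (hA : A.Finite) (N : ℕ) : (nfold d A N).Finite := by
  refine ((Set.Finite.pi fun _ : Fin N => hA).image fun f => ∑ i, f i).subset ?_
  rintro x ⟨f, hf, rfl⟩
  exact ⟨f, fun i _ => hf i, rfl⟩

theorem sum_mem_nfold {t : Multiset (Fin d → ℤ)} (ht : ∀ y ∈ t, y ∈ A) :
    t.sum ∈ nfold d A (Multiset.card t) := by
  obtain ⟨f, hf⟩ := Multiset.exists_map_univ_eq (t := t) rfl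
  exact ⟨f, fun i => ht _ (hf ▸ Multiset.mem_map_of_mem f (Finset.mem_univ i)),
    (congrArg Multiset.sum hf).symm⟩

theorem NAfn_le_card {t : Multiset (Fin d → ℤ)} (ht : ∀ y ∈ t, y ∈ A) (h0 : t.sum ≠ 0) :
    NAfn d A t.sum ≤ Multiset.card t := by
  rw [NAfn, if_neg h0]
  refine Nat.sInf_le ⟨Nat.pos_of_ne_zero fun hcard => h0 ?_, sum_mem_nfold ht⟩
  rw [Multiset.card_eq_zero.mp hcard, Multiset.sum_zero]

theorem Smin.mem_nfold_NAfn (hu : u ∈ Smin d A B) : u ∈ nfold d A (NAfn d A u) := by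
  rcases hu with rfl | ⟨hPA, hu0, -⟩
  · simp only [NAfn, if_pos]
    exact ⟨Fin.elim0, fun i => i.elim0, by simp⟩
  · simp only [PA, Set.mem_iUnion, Set.mem_Ici, exists_prop] at hPA
    rw [NAfn, if_neg hu0]
    exact (Nat.sInf_mem hPA).2

theorem Smin.notMem_of_card_eq (hu : u ∈ Smin d A B) {t : Multiset (Fin d → ℤ)}
    (ht : ∀ y ∈ t, y ∈ A) (hsum : t.sum = u) (hcard : Multiset.card t = NAfn d A u) :
    ∀ x ∈ t, x ∉ B ∪ {0} := by
  rcases hu with rfl | ⟨-, -, hmin⟩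
  · simp only [NAfn, if_pos, Multiset.card_eq_zero] at hcard
    simp [hcard]
  · obtain ⟨f, rfl⟩ := Multiset.exists_map_univ_eq hcard
    intro x hx
    obtain ⟨i, -, rfl⟩ := Multiset.mem_map.mp hx
    exact hmin f (fun i => ht _ (Multiset.mem_map_of_mem f (Finset.mem_univ i))) hsum.symm i

theorem Smin.card_eq_and_notMem_of_sum_eq_subsum (hu : u ∈ Smin d A B) (hu0 : u ≠ 0)
    {a : Fin (NAfn d A u) → Fin d → ℤ} (ha : ∀ i, a i ∈ A) (hrep : u = ∑ i, a i)
    (I : Finset (Fin (NAfn d A u))) {s : Multiset (Fin d → ℤ)} (hs : ∀ y ∈ s, y ∈ A)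
    (hsum : s.sum = ∑ i ∈ I, a i) (hcard : Multiset.card s ≤ I.card) :
    Multiset.card s = I.card ∧ ∀ x ∈ s, x ∉ B ∪ {0} := by
  set t := Iᶜ.val.map a + s
  have ht : ∀ y ∈ t, y ∈ A := by
    intro y hy
    rcases Multiset.mem_add.mp hy with hy | hy
    · obtain ⟨i, -, rfl⟩ := Multiset.mem_map.mp hy
      exact ha i
    · exact hs y hy
  have htsum : t.sum = u := by
    rw [Multiset.sum_add, hsum]
    exact (Finset.sum_compl_add_sum I a).trans hrep.symm
  have htcard : Multiset.card t = NAfn d A u - I.card + Multiset.card s := by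
    rw [Multiset.card_add, Multiset.card_map, ← Finset.card_def, Finset.card_compl,
      Fintype.card_fin]
  have hle := NAfn_le_card ht (htsum ▸ hu0)
  rw [htsum, htcard] at hle
  have hI := Finset.card_le_univ I
  rw [Fintype.card_fin] at hI
  refine ⟨by omega, fun x hx => ?_⟩
  exact Smin.notMem_of_card_eq hu ht htsum (by omega) x (Multiset.mem_add.mpr (Or.inr hx))

end Minimal

section Subsums

variable {d : ℕ} {b : Fin d → Fin d → ℤ} {A : Set (Fin d → ℤ)} {u : Fin d → ℤ}

theorem emb_mem_convexHull_latticeBasis (hb : LinearIndependent ℝ fun i => emb d (b i))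
    (hAH : emb d '' A ⊆ convexHull ℝ (emb d '' (Set.range b ∪ {0}))) {x : Fin d → ℤ}
    (hx : x ∈ A) : emb d x ∈ convexHull ℝ (Set.range (latticeBasis hb) ∪ {0}) :=
  image_emb_range_union_zero hb ▸ hAH ⟨x, hx, rfl⟩

theorem Smin.subsum_notMem_latt (hb : LinearIndependent ℝ fun i => emb d (b i))
    (hBA : Set.range b ⊆ A) (hAH : emb d '' A ⊆ convexHull ℝ (emb d '' (Set.range b ∪ {0})))
    (hu : u ∈ Smin d A (Set.range b)) (hu0 : u ≠ 0)
    {a : Fin (NAfn d A u) → Fin d → ℤ} (ha : ∀ i, a i ∈ A) (hrep : u = ∑ i, a i)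
    {I : Finset (Fin (NAfn d A u))} (hI : I.Nonempty) :
    ∑ i ∈ I, a i ∉ latt d (Set.range b) := by
  intro hv
  obtain ⟨hnn, hle⟩ := (latticeBasis hb).repr_sum_nonneg_and_sum_le_card I
    fun i _ => emb_mem_convexHull_latticeBasis hb hAH (ha i)
  rw [← emb_sum] at hnn hle
  obtain ⟨n, hn, hnc⟩ := exists_nat_coeffs_of_mem_latt hb hv fun j =>
    (hnn j).trans_lt' (by norm_num)
  obtain ⟨s, hsB, hssum, hscard⟩ := Multiset.exists_sum_nsmul_eq n b
  have hcard : Multiset.card s ≤ I.card := by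
    have : ((∑ j, n j : ℕ) : ℝ) ≤ I.card := by
      push_cast
      rw [Finset.sum_congr rfl fun j _ => hnc j]
      exact hle
    rw [hscard]
    exact_mod_cast this
  obtain ⟨heq, hnotB⟩ := Smin.card_eq_and_notMem_of_sum_eq_subsum hu hu0 ha hrep I
    (fun y hy => hBA (hsB y hy)) (hssum.trans hn) hcard
  obtain ⟨x, hx⟩ := Multiset.card_pos_iff_exists_mem.mp (heq ▸ hI.card_pos)
  exact hnotB x hx (Or.inl (hsB x hx))

theorem Smin.subsum_sub_notMem_latt (hb : LinearIndependent ℝ fun i => emb d (b i))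
    (hBA : Set.range b ⊆ A) (hAH : emb d '' A ⊆ convexHull ℝ (emb d '' (Set.range b ∪ {0})))
    (hu : u ∈ Smin d A (Set.range b)) (hu0 : u ≠ 0)
    {a : Fin (NAfn d A u) → Fin d → ℤ} (ha : ∀ i, a i ∈ A) (hrep : u = ∑ i, a i)
    {I : Finset (Fin (NAfn d A u))} (hI : 2 ≤ I.card) {a' : Fin d → ℤ} (ha' : a' ∈ A) :
    ∑ i ∈ I, a i - a' ∉ latt d (Set.range b) := by
  intro hv
  by_cases ha'B : a' ∈ Set.range b ∪ {0}
  · have ha'L : a' ∈ latt d (Set.range b) := by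
      rcases ha'B with ha'B | rfl
      · exact AddSubgroup.subset_closure ha'B
      · exact zero_mem _
    exact Smin.subsum_notMem_latt hb hBA hAH hu hu0 ha hrep
      (Finset.card_pos.mp (by omega : 0 < I.card)) (by simpa using add_mem hv ha'L)
  set Bb := latticeBasis hb
  have ha'H := emb_mem_convexHull_latticeBasis hb hAH ha'
  have hlt : ∀ j, Bb.repr (emb d a') j < 1 :=
    Bb.repr_lt_one_of_mem_convexHull ha'H fun ⟨j, hj⟩ =>
      ha'B (Or.inl ⟨j, emb_injective (by simpa [Bb] using hj)⟩)
  have hpos : 0 < ∑ j, Bb.repr (emb d a') j :=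
    Bb.sum_repr_pos_of_mem_convexHull ha'H fun h =>
      ha'B (Or.inr (emb_injective (h.trans emb_zero.symm)))
  obtain ⟨hnn, hle⟩ := Bb.repr_sum_nonneg_and_sum_le_card I
    fun i _ => emb_mem_convexHull_latticeBasis hb hAH (ha i)
  rw [← emb_sum] at hnn hle
  have hrepr : ∀ j, Bb.repr (emb d (∑ i ∈ I, a i - a')) j =
      Bb.repr (emb d (∑ i ∈ I, a i)) j - Bb.repr (emb d a') j := fun j => by
    rw [emb_sub, map_sub, Finsupp.sub_apply]
  obtain ⟨n, hn, hnc⟩ := exists_nat_coeffs_of_mem_latt hb hv fun j => by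
    rw [hrepr]
    linarith [hnn j, hlt j]
  obtain ⟨s, hsB, hssum, hscard⟩ := Multiset.exists_sum_nsmul_eq n b
  have hcard : Multiset.card (a' ::ₘ s) ≤ I.card := by
    have : ((∑ j, n j : ℕ) : ℝ) < I.card := by
      push_cast
      rw [Finset.sum_congr rfl fun j _ => (hnc j).trans (hrepr j), Finset.sum_sub_distrib]
      linarith
    rw [Multiset.card_cons, hscard]
    exact_mod_cast this
  obtain ⟨heq, hnotB⟩ := Smin.card_eq_and_notMem_of_sum_eq_subsum hu hu0 ha hrep I
    (Multiset.forall_mem_cons.mpr ⟨ha', fun y hy => hBA (hsB y hy)⟩)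
    (by rw [Multiset.sum_cons, hssum, hn, add_sub_cancel]) hcard
  rw [Multiset.card_cons] at heq
  obtain ⟨x, hx⟩ := Multiset.card_pos_iff_exists_mem.mp (by omega : 0 < Multiset.card s)
  exact hnotB x (Multiset.mem_cons_of_mem hx) (Or.inl (hsB x hx))

end Subsums

section Davenport

variable {G : Type*} [AddCommGroup G]

theorem lt_card_of_forall_sum_ne_zero [Finite G] {k : ℕ} (h : Fin k → G)
    (hz : ∀ I : Finset (Fin k), I.Nonempty → ∑ i ∈ I, h i ≠ 0) : k < Nat.card G := by
  classical
  set before : Fin (k + 1) → Finset (Fin k) := fun j => {i | (i : ℕ) < j}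
  set prefixSum : Fin (k + 1) → G := fun j => ∑ i ∈ before j, h i
  have hne : ∀ j₁ j₂ : Fin (k + 1), j₁ < j₂ → prefixSum j₁ ≠ prefixSum j₂ := by
    intro j₁ j₂ hlt heq
    have hsub : before j₁ ⊆ before j₂ := fun i hi => by
      simp only [before, Finset.mem_filter, Finset.mem_univ, true_and] at hi ⊢
      exact hi.trans hlt
    refine hz (before j₂ \ before j₁) ⟨⟨j₁, by omega⟩, ?_⟩ ?_
    · simpa [before] using hlt
    · simpa [prefixSum, heq] using Finset.sum_sdiff (f := h) hsub
  have hinj : Function.Injective prefixSum := fun j₁ j₂ heq => by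
    by_contra h₁₂
    rcases lt_or_gt_of_ne h₁₂ with hlt | hlt
    exacts [hne _ _ hlt heq, hne _ _ hlt heq.symm]
  simpa using Nat.card_le_card_of_injective prefixSum hinj

theorem le_kConst [Finite G] {H : Set G} {k : ℕ} (h : Fin k → G) (hH : ∀ i, h i ∈ H)
    (hz : ∀ I : Finset (Fin k), I.Nonempty → ∑ i ∈ I, h i ≠ 0)
    (hH2 : ∀ I : Finset (Fin k), 2 ≤ I.card → ∑ i ∈ I, h i ∉ H) : k ≤ kConst H :=
  le_csSup ⟨Nat.card G, fun _ ⟨h, _, hz, _⟩ => (lt_card_of_forall_sum_ne_zero h hz).le⟩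
    ⟨h, hH, hz, hH2⟩

end Davenport

theorem Smin.exists_quotient_seq {d : ℕ} {b : Fin d → Fin d → ℤ} {A : Set (Fin d → ℤ)}
    {u : Fin d → ℤ} (hb : LinearIndependent ℝ fun i => emb d (b i)) (hBA : Set.range b ⊆ A)
    (hAH : emb d '' A ⊆ convexHull ℝ (emb d '' (Set.range b ∪ {0})))
    (hu : u ∈ Smin d A (Set.range b)) :
    ∃ h : Fin (NAfn d A u) → (Fin d → ℤ) ⧸ latt d (Set.range b),
      (∀ i, h i ∈ QuotientAddGroup.mk '' A \ {0}) ∧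
      (∀ I : Finset (Fin (NAfn d A u)), I.Nonempty → ∑ i ∈ I, h i ≠ 0) ∧
      (∀ I : Finset (Fin (NAfn d A u)), 2 ≤ I.card →
        ∑ i ∈ I, h i ∉ QuotientAddGroup.mk '' A \ {0}) := by
  obtain ⟨a, ha, hrep⟩ := Smin.mem_nfold_NAfn hu
  have hu0 (i : Fin (NAfn d A u)) : u ≠ 0 := fun h0 => by
    simp only [NAfn, h0, if_pos] at i
    exact i.elim0
  have hsum (I : Finset (Fin (NAfn d A u))) :
      ∑ i ∈ I, (a i : (Fin d → ℤ) ⧸ latt d (Set.range b)) = ↑(∑ i ∈ I, a i) :=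
    (map_sum (QuotientAddGroup.mk' _) a I).symm
  have hzero (I : Finset (Fin (NAfn d A u))) (hI : I.Nonempty) :
      ∑ i ∈ I, (a i : (Fin d → ℤ) ⧸ latt d (Set.range b)) ≠ 0 := by
    rw [hsum, Ne, QuotientAddGroup.eq_zero_iff]
    exact Smin.subsum_notMem_latt hb hBA hAH hu (hu0 hI.choose) ha hrep hI
  refine ⟨fun i => a i, fun i => ⟨⟨a i, ha i, rfl⟩, ?_⟩, hzero, ?_⟩
  · simpa using hzero {i} (Finset.singleton_nonempty i)
  · rintro I hI ⟨⟨a', ha', heq⟩, -⟩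
    obtain ⟨i, -⟩ := Finset.card_pos.mp (by omega : 0 < I.card)
    rw [hsum] at heq
    exact Smin.subsum_sub_notMem_latt hb hBA hAH hu (hu0 i) ha hrep hI ha'
      (QuotientAddGroup.eq_iff_sub_mem.mp heq.symm)

/-- Subsum properties of representations of nonzero `B`-minimal elements, finiteness of
`S(A,B)`, and the bound `K(A,B) ≤ k(Λ_A/Λ_B, A_B ∖ {0})`. -/
theorem simplex_davenport_argument (d : ℕ) (b : Fin d → (Fin d → ℤ))
    (hb : LinearIndependent ℝ (fun i => emb d (b i)))
    (A : Finset (Fin d → ℤ))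
    (hBA : Set.range b ∪ {0} ⊆ (A : Set (Fin d → ℤ)))
    (hAH : emb d '' (A : Set (Fin d → ℤ)) ⊆ convexHull ℝ (emb d '' (Set.range b ∪ {0}))) :
    (∀ u ∈ Smin d ↑A (Set.range b), u ≠ 0 →
      ∀ a : Fin (NAfn d ↑A u) → (Fin d → ℤ), (∀ i, a i ∈ A) → u = ∑ i, a i →
        (∀ I : Finset (Fin (NAfn d ↑A u)), I.Nonempty →
            (∑ i ∈ I, a i) ∉ latt d (Set.range b)) ∧
        (∀ I : Finset (Fin (NAfn d ↑A u)), 2 ≤ I.card →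
            ∀ a' ∈ A, (∑ i ∈ I, a i) - a' ∉ latt d (Set.range b))) ∧
    (Smin d ↑A (Set.range b)).Finite ∧
    sSup (NAfn d ↑A '' Smin d ↑A (Set.range b)) ≤
      kConst (((QuotientAddGroup.mk '' (A : Set (Fin d → ℤ))) \ {0} :
        Set ((Fin d → ℤ) ⧸ latt d (Set.range b)))) := by
  have hB : Set.range b ⊆ ↑A := Set.subset_union_left.trans hBA
  have := finite_quotient_latt hb
  have hseq u (hu : u ∈ Smin d ↑A (Set.range b)) := Smin.exists_quotient_seq hb hB hAH hu
  refine ⟨fun u hu hu0 a ha hrep =>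
    ⟨fun I hI => Smin.subsum_notMem_latt hb hB hAH hu hu0 ha hrep hI,
      fun I hI a' ha' => Smin.subsum_sub_notMem_latt hb hB hAH hu hu0 ha hrep hI ha'⟩, ?_, ?_⟩
  · refine ((Set.finite_Iio (Nat.card ((Fin d → ℤ) ⧸ latt d (Set.range b)))).biUnion
      fun N _ => nfold_finite A.finite_toSet N).subset fun u hu => ?_
    obtain ⟨h, -, hz, -⟩ := hseq u hu
    exact Set.mem_biUnion (lt_card_of_forall_sum_ne_zero h hz) (Smin.mem_nfold_NAfn hu)
  · refine csSup_le ⟨0, 0, Or.inl rfl, by simp [NAfn]⟩ ?_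
    rintro _ ⟨u, hu, rfl⟩
    obtain ⟨h, hH, hz, hH2⟩ := hseq u hu
    exact le_kConst h hH hz hH2
end
end

section
/- Let M be an m-by-n integer matrix and b ∈ ℤ^m. Suppose all entries of M are at most K_1 in absolute value and ‖b‖_∞ ≤ K_2, where K_1, K_2 ≥ 1. If there exists x ∈ ℤ_{>0}^n with M x = b, then there exists y ∈ ℤ_{>0}^n with M y = b and ‖y‖_∞ ≤ 2 n^{m+1} m^m K_1^{2m} + m^m K_1^{m−1} K_2. -/
open Pointwise MeasureTheory

noncomputable section

/-!
Among the positive solutions pick one, `y`, minimising `∑ⱼ yⱼ + #{j | yⱼ > C}` with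
`C = nᵐ K₁ᵐ`, and let `S` be the set of its coordinates exceeding `C`.

If the columns of `M` indexed by `S` were linearly dependent over `ℚ`, Cramer's rule on a maximal
independent subfamily would produce a nonzero integer kernel vector `z`, supported on `S`, with
entries at most `C`. Choosing the sign so that `∑ zⱼ ≥ 0` and subtracting from `y` the largest
multiple of `z` that keeps it positive gives a positive solution with no larger coordinate sum and
with strictly fewer coordinates above `C`, contradicting minimality.

So these columns are independent, and Cramer's rule for the system `∑_{j ∈ S} yⱼ Mⱼ = b'`, where
`b'` is `b` minus the contribution of the coordinates at most `C`, bounds the remaining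
coordinates.
-/

open Matrix Finset
open scoped Nat

theorem Nat.mul_factorial_le_pow (n : ℕ) : n * n ! ≤ n ^ n := by
  rcases n with _ | n
  · simp
  · have h := Nat.factorial_mul_descFactorial (Nat.le_succ n)
    rw [Nat.succ_sub (le_refl n), Nat.sub_self, Nat.factorial_one, one_mul] at h
    rw [pow_succ', ← h]
    exact Nat.mul_le_mul_left _ (Nat.descFactorial_le_pow _ _)

section Determinant

variable {ι : Type*} [Fintype ι] [DecidableEq ι]

theorem Matrix.natAbs_det_le_factorial_mul_prod (A : Matrix ι ι ℤ) (c : ι → ℕ)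
    (hA : ∀ i j, (A i j).natAbs ≤ c i) : A.det.natAbs ≤ (Fintype.card ι)! * ∏ i, c i :=
  calc A.det.natAbs
      ≤ ∑ σ : Equiv.Perm ι, (Equiv.Perm.sign σ • ∏ i, A (σ i) i).natAbs := by
        rw [det_apply]; exact Int.natAbs_sum_le _ _
    _ ≤ ∑ _σ : Equiv.Perm ι, ∏ i, c i := by
        gcongr with σ
        rw [Units.smul_def, smul_eq_mul, Int.natAbs_mul, Int.units_natAbs, one_mul,
          ← Equiv.prod_comp σ c]
        exact (map_prod Int.natAbsHom _ _).trans_le (prod_le_prod' fun i _ => hA _ _)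
    _ = (Fintype.card ι)! * ∏ i, c i := by simp [Fintype.card_perm]

theorem Matrix.natAbs_adjugate_le (A : Matrix ι ι ℤ) {K : ℕ} (hA : ∀ i j, (A i j).natAbs ≤ K)
    (i j : ι) : (A.adjugate i j).natAbs ≤ (Fintype.card ι)! * K ^ (Fintype.card ι - 1) := by
  have hrow : ∀ k l, ((A.updateRow j (Pi.single i 1)) k l).natAbs ≤ if k = j then 1 else K := by
    intro k l
    rcases eq_or_ne k j with rfl | hk
    · rw [updateRow_self, if_pos rfl, Pi.single_apply]; split_ifs <;> simp
    · rw [updateRow_ne hk, if_neg hk]; exact hA k l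
  calc (A.adjugate i j).natAbs ≤ (Fintype.card ι)! * ∏ k, if k = j then 1 else K := by
        rw [adjugate_apply]; exact natAbs_det_le_factorial_mul_prod _ _ hrow
    _ = (Fintype.card ι)! * K ^ (Fintype.card ι - 1) := by
        simp [Finset.prod_ite, Finset.filter_ne', Finset.card_erase_of_mem]

end Determinant

theorem LinearIndepOn.card_le {K m ι : Type*} [Field K] [Fintype m] {v : ι → m → K}
    {T : Finset ι} (h : LinearIndepOn K v T) : #T ≤ Fintype.card m := by
  simpa using h.fintype_card_le_finrank

theorem exists_linearIndepOn_mem_span_of_not_linearIndepOn {K V ι : Type*} [DivisionRing K]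
    [AddCommGroup V] [Module K V] {v : ι → V} {S : Finset ι} (hS : ¬ LinearIndepOn K v S) :
    ∃ T ⊆ S, LinearIndepOn K v T ∧ ∃ j ∈ S, j ∉ T ∧ v j ∈ Submodule.span K (v '' T) := by
  classical
  obtain ⟨T, hT, hmax⟩ := (S.powerset.filter fun T : Finset ι => LinearIndepOn K v (T : Set ι))
    |>.exists_max_image card ⟨∅, by simp⟩
  rw [mem_filter, mem_powerset] at hT
  obtain ⟨j, hjS, hjT⟩ := not_subset.mp fun h => hS (hT.1.antisymm h ▸ hT.2)
  refine ⟨T, hT.1, hT.2, j, hjS, hjT, by_contra fun hj => ?_⟩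
  have := hmax (insert j T) (mem_filter.mpr ⟨mem_powerset.mpr (insert_subset hjS hT.1),
    by simpa using hT.2.insert hj⟩)
  rw [card_insert_of_notMem hjT] at this
  omega

theorem Matrix.exists_det_submatrix_ne_zero {K m ι : Type*} [Field K] [Fintype m] [Fintype ι]
    [DecidableEq ι] (A : Matrix m ι K) (hA : LinearIndependent K A.col) :
    ∃ r : ι → m, (A.submatrix r id).det ≠ 0 := by
  have hrank : A.rank = Fintype.card ι := by
    rw [← rank_transpose]; exact hA.rank_matrix
  have hspan : Submodule.span K (Set.range A.row) = ⊤ := by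
    apply Submodule.eq_top_of_finrank_eq
    rw [← rank_eq_finrank_span_row, hrank, Module.finrank_fintype_fun_eq_card]
  obtain ⟨κ, a, -, hspan', hli⟩ := exists_linearIndependent' K A.row
  let e : κ ≃ ι :=
    (Module.Basis.mk hli (by rw [hspan', hspan])).indexEquiv (Pi.basisFun K ι)
  refine ⟨a ∘ e.symm, ?_⟩
  have : LinearIndependent K (A.submatrix (a ∘ e.symm) id).row := hli.comp e.symm e.symm.injective
  exact ((linearIndependent_rows_iff_isUnit.mp this).map detMonoidHom).ne_zero

/-- Cramer's rule: `D` is the determinant of a nonsingular `#T × #T` submatrix of the columns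
in `T`. -/
theorem Matrix.exists_int_mul_eq_of_linearIndepOn {m ι : Type*} [Fintype m] [DecidableEq ι]
    (A : Matrix m ι ℤ) {K R : ℕ} (hA : ∀ i j, (A i j).natAbs ≤ K) {T : Finset ι}
    (hT : LinearIndepOn ℚ (A.map (Int.cast : ℤ → ℚ)).col T) {c : ι → ℚ} {b : m → ℤ}
    (hb : ∀ i, (b i).natAbs ≤ R) (hc : ∀ i, ∑ j ∈ T, (A i j : ℚ) * c j = b i) :
    ∃ D : ℤ, D ≠ 0 ∧ D.natAbs ≤ (#T)! * K ^ #T ∧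
      ∀ j ∈ T, ∃ z : ℤ, (z : ℚ) = D * c j ∧ z.natAbs ≤ #T * ((#T)! * K ^ (#T - 1)) * R := by
  obtain ⟨r, hr⟩ :=
    exists_det_submatrix_ne_zero ((A.map (Int.cast : ℤ → ℚ)).submatrix id ((↑) : T → ι)) hT
  set B : Matrix T T ℤ := A.submatrix r (↑)
  set Bq := (Int.castRingHom ℚ).mapMatrix B
  have hdet : B.det ≠ 0 := by
    change Bq.det ≠ 0 at hr
    rwa [← RingHom.map_det, map_ne_zero_iff _ Int.cast_injective] at hr
  have hBc : Bq *ᵥ (fun t : T => c t) = fun t => (b (r t) : ℚ) := by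
    ext t
    rw [← hc (r t), ← Finset.sum_coe_sort T]
    rfl
  refine ⟨B.det, hdet, ?_, fun j hj => ⟨(B.adjugate *ᵥ (b ∘ r)) ⟨j, hj⟩, ?_, ?_⟩⟩
  · simpa [Fintype.card_coe] using
      natAbs_det_le_factorial_mul_prod B (fun _ => K) (fun _ _ => hA _ _)
  · have h := congrFun (congrArg (mulVec Bq.adjugate) hBc) ⟨j, hj⟩
    rw [mulVec_mulVec, adjugate_mul, smul_mulVec, one_mulVec, ← RingHom.map_det,
      ← RingHom.map_adjugate] at h
    change Int.castRingHom ℚ _ = _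
    rw [RingHom.map_mulVec]
    exact h.symm
  · calc _ ≤ ∑ t, (B.adjugate ⟨j, hj⟩ t * b (r t)).natAbs := Int.natAbs_sum_le _ _
      _ ≤ ∑ _t : T, (#T)! * K ^ (#T - 1) * R := by
        gcongr with t
        rw [Int.natAbs_mul]
        gcongr
        · simpa [Fintype.card_coe] using natAbs_adjugate_le B (fun _ _ => hA _ _) _ t
        · exact hb _
      _ = _ := by simp [mul_assoc]

theorem Matrix.exists_ne_zero_mulVec_eq_zero_of_not_linearIndepOn {m ι : Type*} [Fintype m]
    [Fintype ι] [DecidableEq ι] (A : Matrix m ι ℤ) {K : ℕ} (hK : 1 ≤ K)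
    (hA : ∀ i j, (A i j).natAbs ≤ K) {S : Finset ι}
    (hS : ¬ LinearIndepOn ℚ (A.map (Int.cast : ℤ → ℚ)).col S) :
    ∃ z : ι → ℤ, z ≠ 0 ∧ (∀ j ∉ S, z j = 0) ∧
      (∀ j, (z j).natAbs ≤ #S ^ Fintype.card m * K ^ Fintype.card m) ∧ A *ᵥ z = 0 := by
  obtain ⟨T, hTS, hT, j₀, hj₀S, hj₀T, hspan⟩ :=
    exists_linearIndepOn_mem_span_of_not_linearIndepOn hS
  obtain ⟨c, hc⟩ := (Submodule.mem_span_image_finset_iff_exists_fun' ℚ).mp hspan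
  have hcol : ∀ i, ∑ j ∈ T, (A i j : ℚ) * c j = A i j₀ := fun i => by
    simpa [Finset.sum_apply, mul_comm] using congrFun hc i
  obtain ⟨D, hD, hDle, hz⟩ := A.exists_int_mul_eq_of_linearIndepOn hA hT (fun i => hA i j₀) hcol
  choose! z hzc hzle using hz
  -- the coefficients of `D • (∑_{j ∈ T} c j • colⱼ - col j₀) = 0`; integral as `z = D • c` on `T`
  set w : ι → ℤ := (fun j => if j ∈ T then z j else 0) - Pi.single j₀ D
  have ht : #T < #S :=
    card_lt_card (ssubset_of_subset_of_ne hTS (by rintro rfl; exact hj₀T hj₀S))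
  have htm : #T ≤ Fintype.card m := hT.card_le
  have hsmall : ∀ y : ℤ, y.natAbs ≤ #T ^ #T * K ^ #T →
      y.natAbs ≤ #S ^ Fintype.card m * K ^ Fintype.card m := fun y hy =>
    hy.trans (Nat.mul_le_mul ((Nat.pow_le_pow_left ht.le _).trans
      (Nat.pow_le_pow_right (by omega) htm)) (Nat.pow_le_pow_right hK htm))
  refine ⟨w, fun h => hD ?_, fun j hj => ?_, fun j => hsmall _ ?_, ?_⟩
  · simpa [w, hj₀T] using congrFun h j₀
  · have hjT : j ∉ T := fun h => hj (hTS h)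
    have hj₀ : j ≠ j₀ := by rintro rfl; exact hj hj₀S
    simp [w, hjT, hj₀]
  · by_cases hjT : j ∈ T
    · have hj₀ : j ≠ j₀ := by rintro rfl; exact hj₀T hjT
      simp only [w, Pi.sub_apply, if_pos hjT, Pi.single_eq_of_ne hj₀, sub_zero]
      refine (hzle j hjT).trans ?_
      rcases Nat.eq_zero_or_pos #T with h0 | h0
      · simp [h0]
      · calc #T * ((#T)! * K ^ (#T - 1)) * K = #T * (#T)! * (K ^ (#T - 1) * K) := by ring
          _ = #T * (#T)! * K ^ #T := by rw [← pow_succ, Nat.sub_add_cancel h0]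
          _ ≤ #T ^ #T * K ^ #T := by gcongr; exact Nat.mul_factorial_le_pow _
    · by_cases hj₀ : j = j₀
      · subst hj₀
        simp only [w, Pi.sub_apply, if_neg hjT, Pi.single_eq_same, zero_sub, Int.natAbs_neg]
        exact hDle.trans (Nat.mul_le_mul_right _ (Nat.factorial_le_pow _))
      · simp [w, hjT, hj₀]
  · ext i
    apply Int.cast_injective (α := ℚ)
    have hsum : ∑ j ∈ T, (A i j : ℚ) * z j = D * A i j₀ := by
      rw [← hcol, Finset.mul_sum]
      exact Finset.sum_congr rfl fun j hj => by rw [hzc j hj]; ring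
    simp [w, mulVec, dotProduct, mul_sub, Finset.sum_sub_distrib, mul_ite, Finset.sum_ite_mem,
      Pi.single_apply, hsum, mul_comm]

theorem Matrix.natAbs_le_of_mulVec_eq_of_linearIndepOn {m ι : Type*} [Fintype m] [Fintype ι]
    [DecidableEq ι] (A : Matrix m ι ℤ) {K K' C : ℕ} (hA : ∀ i j, (A i j).natAbs ≤ K) {b : m → ℤ}
    (hb : ∀ i, (b i).natAbs ≤ K') {x : ι → ℤ} (hx : A *ᵥ x = b) {S : Finset ι}
    (hS : LinearIndepOn ℚ (A.map (Int.cast : ℤ → ℚ)).col S) (hxC : ∀ j ∉ S, (x j).natAbs ≤ C)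
    {j : ι} (hj : j ∈ S) :
    (x j).natAbs ≤ #S * ((#S)! * K ^ (#S - 1)) * (K' + Fintype.card ι * C * K) := by
  set b' : m → ℤ := fun i => b i - ∑ j ∈ Sᶜ, A i j * x j
  have hc : ∀ i, ∑ j ∈ S, (A i j : ℚ) * x j = b' i := fun i => by
    have h := congrFun hx i
    rw [mulVec, dotProduct, ← sum_add_sum_compl S] at h
    exact_mod_cast eq_sub_of_add_eq h
  have hb' : ∀ i, (b' i).natAbs ≤ K' + Fintype.card ι * C * K := fun i =>
    calc (b' i).natAbs ≤ (b i).natAbs + ∑ j ∈ Sᶜ, (A i j * x j).natAbs :=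
          (Int.natAbs_sub_le _ _).trans (Nat.add_le_add_left (Int.natAbs_sum_le _ _) _)
      _ ≤ K' + ∑ _j ∈ Sᶜ, C * K := by
          gcongr with j hj
          · exact hb i
          · rw [Int.natAbs_mul, mul_comm]
            exact Nat.mul_le_mul (hxC j (mem_compl.mp hj)) (hA i j)
      _ ≤ K' + ∑ _j : ι, C * K := by gcongr; exact subset_univ _
      _ = K' + Fintype.card ι * C * K := by simp [mul_assoc]
  obtain ⟨D, hD, -, hz⟩ := A.exists_int_mul_eq_of_linearIndepOn hA hS hb' hc
  obtain ⟨z, hzx, hzle⟩ := hz j hj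
  have hzx : z = D * x j := by exact_mod_cast hzx
  calc (x j).natAbs ≤ D.natAbs * (x j).natAbs := Nat.le_mul_of_pos_left _ (Int.natAbs_pos.mpr hD)
    _ = z.natAbs := by rw [hzx, Int.natAbs_mul]
    _ ≤ _ := hzle


theorem exists_pos_sub_mul_le {ι : Type*} [Fintype ι] {x z : ι → ℤ} (hx : ∀ j, 0 < x j)
    (hz : ∃ j, 0 < z j) :
    ∃ k : ℤ, 0 ≤ k ∧ (∀ j, 0 < x j - k * z j) ∧ ∃ j, 0 < z j ∧ x j - k * z j ≤ z j := by
  obtain ⟨jp, hjp⟩ := hz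
  obtain ⟨jm, hjm, hmin⟩ :=
    exists_min_image {j | 0 < z j} (fun j => (x j - 1) / z j) ⟨jp, by simpa using hjp⟩
  set k := (x jm - 1) / z jm
  have hzjm : 0 < z jm := by simpa using hjm
  have hk : 0 ≤ k := Int.ediv_nonneg (by linarith [hx jm]) hzjm.le
  refine ⟨k, hk, fun j => ?_, jm, hzjm, ?_⟩
  · rcases le_or_gt (z j) 0 with h | h
    · nlinarith [hx j]
    · linarith [(Int.le_ediv_iff_mul_le h).mp (hmin j (by simpa using h))]
  · linarith [Int.mul_ediv_add_emod (x jm - 1) (z jm), Int.emod_lt_of_pos (x jm - 1) hzjm]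

theorem Matrix.exists_pos_mulVec_eq_sum_add_card_lt {m ι : Type*} [Fintype ι] (A : Matrix m ι ℤ)
    {b : m → ℤ} {C : ℕ} {x z : ι → ℤ} (hx : ∀ j, 0 < x j) (hAx : A *ᵥ x = b) (hz : z ≠ 0)
    (hzx : ∀ j, x j ≤ C → z j = 0) (hzC : ∀ j, (z j).natAbs ≤ C) (hAz : A *ᵥ z = 0) :
    ∃ x' : ι → ℤ, (∀ j, 0 < x' j) ∧ A *ᵥ x' = b ∧
      ∑ j, x' j + #{j | (C : ℤ) < x' j} < ∑ j, x j + #{j | (C : ℤ) < x j} := by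
  wlog hsum : 0 ≤ ∑ j, z j generalizing z
  · refine this (z := -z) (neg_ne_zero.mpr hz) (fun j hj => by simp [hzx j hj])
      (fun j => by simpa using hzC j) (by rw [mulVec_neg, hAz, neg_zero]) ?_
    simp only [Pi.neg_apply, sum_neg_distrib]
    linarith
  have hpos : ∃ j, 0 < z j := by
    by_contra! h
    refine hz (funext fun j => ?_)
    exact (sum_eq_zero_iff_of_nonpos fun j _ => h j).mp
      (le_antisymm (sum_nonpos fun j _ => h j) hsum) j (mem_univ j)
  obtain ⟨k, hk0, hk, jm, hzjm, hjm⟩ := exists_pos_sub_mul_le hx hpos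
  refine ⟨x - k • z, fun j => by simpa using hk j,
    by rw [mulVec_sub, mulVec_smul, hAx, hAz, smul_zero, sub_zero], ?_⟩
  have hsub : ({j | (C : ℤ) < (x - k • z) j} : Finset ι) ⊂
      ({j | (C : ℤ) < x j} : Finset ι) := by
    refine (ssubset_iff_of_subset fun j hj => ?_).mpr ⟨jm, ?_, ?_⟩
    · simp only [mem_filter, mem_univ, true_and, Pi.sub_apply, Pi.smul_apply, smul_eq_mul]
        at hj ⊢
      by_contra! h
      rw [hzx j h] at hj
      linarith
    · simpa using fun h => hzjm.ne' (hzx jm h)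
    · have : z jm ≤ C := Int.le_natAbs.trans (by exact_mod_cast hzC jm)
      simpa using hjm.trans this
  have hsum' : ∑ j, (x - k • z) j = ∑ j, x j - k * ∑ j, z j := by
    simp [sum_sub_distrib, mul_sum]
  have := card_lt_card hsub
  rw [hsum']
  nlinarith

theorem cramer_bound_le {m n s K K' : ℕ} (hK : 1 ≤ K) (hs : 1 ≤ s) (hsm : s ≤ m) :
    s * (s ! * K ^ (s - 1)) * (K' + n * (n ^ m * K ^ m) * K) ≤
      2 * n ^ (m + 1) * m ^ m * K ^ (2 * m) + m ^ m * K ^ (m - 1) * K' := by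
  obtain ⟨m, rfl⟩ : ∃ m', m = m' + 1 := ⟨m - 1, by omega⟩
  have hss : s * s ! ≤ (m + 1) ^ (m + 1) :=
    (Nat.mul_factorial_le_pow s).trans
      ((Nat.pow_le_pow_left hsm s).trans (Nat.pow_le_pow_right (by omega) hsm))
  calc s * (s ! * K ^ (s - 1)) * (K' + n * (n ^ (m + 1) * K ^ (m + 1)) * K)
      = s * s ! * K ^ (s - 1) * (K' + n * (n ^ (m + 1) * K ^ (m + 1)) * K) := by ring
    _ ≤ (m + 1) ^ (m + 1) * K ^ m * (K' + n * (n ^ (m + 1) * K ^ (m + 1)) * K) := by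
        gcongr
        omega
    _ ≤ _ := by
        simp only [Nat.add_sub_cancel]
        ring_nf
        omega

theorem pow_mul_pow_le_bound {m n K K' : ℕ} (hK : 1 ≤ K) (hn : 1 ≤ n) :
    n ^ m * K ^ m ≤ 2 * n ^ (m + 1) * m ^ m * K ^ (2 * m) + m ^ m * K ^ (m - 1) * K' :=
  calc n ^ m * K ^ m = 1 * n ^ m * 1 * K ^ m := by ring
    _ ≤ 2 * n ^ (m + 1) * m ^ m * K ^ (2 * m) := by
        have := Nat.pow_self_pos (n := m)
        gcongr <;> omega
    _ ≤ _ := Nat.le_add_right _ _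

theorem positive_solution_general_general (m n : ℕ)
    (M : Matrix (Fin m) (Fin n) ℤ)
    (b : Fin m → ℤ) (K1 K2 : ℕ) (hK1 : 1 ≤ K1)
    (hM : ∀ i j, (M i j).natAbs ≤ K1) (hb : ∀ i, (b i).natAbs ≤ K2)
    (x : Fin n → ℤ) (hx : ∀ j, 0 < x j) (hMx : M.mulVec x = b) :
    ∃ y : Fin n → ℤ, (∀ j, 0 < y j) ∧ M.mulVec y = b ∧
      ∀ j, (y j).natAbs ≤
        2 * n ^ (m + 1) * m ^ m * K1 ^ (2 * m) + m ^ m * K1 ^ (m - 1) * K2 := by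
  set C := n ^ m * K1 ^ m
  obtain ⟨y, ⟨hy, hMy⟩, hmin⟩ :=
    (measure fun y : Fin n → ℤ => (∑ j, y j + #{j | (C : ℤ) < y j}).toNat).wf.has_min
      {y | (∀ j, 0 < y j) ∧ M *ᵥ y = b} ⟨x, hx, hMx⟩
  set S : Finset (Fin n) := {j | (C : ℤ) < y j}
  have hyC : ∀ j ∉ S, (y j).natAbs ≤ C := fun j hj => by
    have := hy j
    simp only [S, mem_filter, mem_univ, true_and, not_lt] at hj
    omega
  refine ⟨y, hy, hMy, fun j => ?_⟩
  by_cases hS : LinearIndepOn ℚ (M.map (Int.cast : ℤ → ℚ)).col S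
  · by_cases hj : j ∈ S
    · refine (M.natAbs_le_of_mulVec_eq_of_linearIndepOn hM hb hMy hS hyC hj).trans ?_
      simpa using cramer_bound_le hK1 (card_pos.mpr ⟨j, hj⟩) (by simpa using hS.card_le)
    · exact (hyC j hj).trans (pow_mul_pow_le_bound hK1 (Fin.pos j))
  · obtain ⟨z, hz, hzS, hzC, hMz⟩ :=
      M.exists_ne_zero_mulVec_eq_zero_of_not_linearIndepOn hK1 hM hS
    have hSC : #S ^ Fintype.card (Fin m) * K1 ^ Fintype.card (Fin m) ≤ C := by
      simpa using Nat.mul_le_mul_right _ (Nat.pow_le_pow_left (card_le_univ S) m)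
    obtain ⟨y', hy', hMy', hlt⟩ := M.exists_pos_mulVec_eq_sum_add_card_lt hy hMy hz
      (fun j hj => hzS j (by simpa [S] using hj)) (fun j => (hzC j).trans hSC) hMz
    have : 0 ≤ ∑ j, y' j := sum_nonneg fun j _ => (hy' j).le
    exact (hmin y' ⟨hy', hMy'⟩ (by show (_ : ℤ).toNat < (_ : ℤ).toNat; omega)).elim

/-- A positive integer solution of `My = b` with controlled size, general case. -/
theorem positive_solution_general (m n : ℕ)
    (M : Matrix (Fin m) (Fin n) ℤ)
    (b : Fin m → ℤ) (K1 K2 : ℕ) (hK1 : 1 ≤ K1) (hK2 : 1 ≤ K2)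
    (hM : ∀ i j, (M i j).natAbs ≤ K1) (hb : ∀ i, (b i).natAbs ≤ K2)
    (x : Fin n → ℤ) (hx : ∀ j, 0 < x j) (hMx : M.mulVec x = b) :
    ∃ y : Fin n → ℤ, (∀ j, 0 < y j) ∧ M.mulVec y = b ∧
      ∀ j, (y j).natAbs ≤
        2 * n ^ (m + 1) * m ^ m * K1 ^ (2 * m) + m ^ m * K1 ^ (m - 1) * K2 :=
  positive_solution_general_general m n M b K1 K2 hK1 hM hb x hx hMx
end
end
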